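/- arXiv:2312.10423 — 2 statements merged into one kernel-verified Lean document; each statement's English description precedes it below -/
import Mathlib

section
/- Let F, β, α, p, q be real numbers with p ≥ 0, q ≥ 0, α ≥ 0, and F + β + α ≥ 0. Then (F + β)·q + α·|q − p| ≥ p·min(F + β, α). -/
/-- Pointwise inequality underlying weak duality for DRO under total variation
(Proposition 2 of the paper): for `p, q, α ≥ 0` and `F + β + α ≥ 0`,
`(F + β)·q + α·|q − p| ≥ p·min(F + β, α)`. -/
theorem pointwise_weak_duality
    (F β α p q : ℝ) (hp : 0 ≤ p) (hq : 0 ≤ q) (hα : 0 ≤ α)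
    (hFβα : 0 ≤ F + β + α) :
    p * min (F + β) α ≤ (F + β) * q + α * |q - p| := by
  rcases abs_cases (q - p) with ⟨h1, h2⟩ | ⟨h1, h2⟩ <;>
  rcases le_total (F + β) α with h | h <;>
  simp [min_eq_left, min_eq_right, h] <;> nlinarith
end

section
/- Let (C, μ) be a measure space, let p, q : C → ℝ be probability densities with respect to μ (measurable, nonnegative μ-a.e., integrating to 1), and let f : C → ℝ be a bounded measurable function. Let δ > 0 and suppose ∫_C |q − p| dμ ≤ δ. Then for every pair (α, β) ∈ ℝ² with α ≥ 0 and α + β ≥ −inf_{c ∈ C} f(c), one has ∫_C f·q dμ ≥ −β − δ·α + ∫_C p·min(f + β, α) dμ. -/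
open MeasureTheory

/-! Truncating `f + β` at `α` gives a function `g` with `|g| ≤ α` (this is what dual feasibility
buys). Then `∫ g p ≤ ∫ g q + α ∫ |q - p| ≤ ∫ g q + δ α`, and `g ≤ f + β` together with `q ≥ 0`,
`∫ q = 1` gives `∫ g q ≤ ∫ f q + β`. -/

section

variable {C : Type*} [MeasurableSpace C] {μ : Measure C}

lemma abs_min_add_le_of_neg_le {x m α β : ℝ} (hα : 0 ≤ α) (hmx : m ≤ x) (h : -m ≤ α + β) :
    |min (x + β) α| ≤ α :=
  abs_le.mpr ⟨le_min (by linarith) (by linarith), min_le_right _ _⟩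

lemma abs_integral_mul_sub_integral_mul_le {g p q : C → ℝ} {a : ℝ}
    (hg : AEStronglyMeasurable g μ) (hga : ∀ᵐ c ∂μ, |g c| ≤ a)
    (hp : Integrable p μ) (hq : Integrable q μ) :
    |∫ c, g c * q c ∂μ - ∫ c, g c * p c ∂μ| ≤ a * ∫ c, |q c - p c| ∂μ := by
  have hga' : ∀ᵐ c ∂μ, ‖g c‖ ≤ a := hga
  calc |∫ c, g c * q c ∂μ - ∫ c, g c * p c ∂μ| = ‖∫ c, g c * (q c - p c) ∂μ‖ := by
        rw [← integral_sub (hq.bdd_mul hg hga') (hp.bdd_mul hg hga'), Real.norm_eq_abs]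
        simp_rw [mul_sub]
    _ ≤ ∫ c, a * |q c - p c| ∂μ := by
        refine norm_integral_le_of_norm_le ((hq.sub hp).abs.const_mul a) ?_
        filter_upwards [hga] with c hc
        rw [norm_mul, Real.norm_eq_abs, Real.norm_eq_abs]
        exact mul_le_mul_of_nonneg_right hc (abs_nonneg _)
    _ = a * ∫ c, |q c - p c| ∂μ := integral_const_mul a _

lemma integral_mul_le_integral_mul_add_of_le {f g q : C → ℝ} {β : ℝ}
    (hq0 : 0 ≤ᵐ[μ] q) (hq1 : ∫ c, q c ∂μ = 1)
    (hgq : Integrable (fun c => g c * q c) μ) (hfq : Integrable (fun c => f c * q c) μ)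
    (hgf : ∀ c, g c ≤ f c + β) :
    ∫ c, g c * q c ∂μ ≤ ∫ c, f c * q c ∂μ + β := by
  have hβq : Integrable (fun c => β * q c) μ := (integrable_of_integral_eq_one hq1).const_mul β
  calc ∫ c, g c * q c ∂μ ≤ ∫ c, f c * q c + β * q c ∂μ :=
        integral_mono_ae hgq (hfq.add hβq) <| by
          filter_upwards [hq0] with c hc
          rw [← add_mul]
          exact mul_le_mul_of_nonneg_right (hgf c) hc
    _ = ∫ c, f c * q c ∂μ + β := by
        rw [integral_add hfq hβq, integral_const_mul, hq1, mul_one]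

end

theorem weak_duality_total_variation_general
    {C : Type*} [MeasurableSpace C] (μ : Measure C)
    (p q : C → ℝ)
    (hq0 : 0 ≤ᵐ[μ] q)
    (hp1 : (∫ c, p c ∂μ) = 1) (hq1 : (∫ c, q c ∂μ) = 1)
    (f : C → ℝ) (hf : Measurable f) (B : ℝ) (hfB : ∀ c, |f c| ≤ B)
    (δ : ℝ) (hqp : (∫ c, |q c - p c| ∂μ) ≤ δ)
    (α β : ℝ) (hα : 0 ≤ α) (hαβ : -(⨅ c, f c) ≤ α + β) :
    -β - δ * α + ∫ c, p c * min (f c + β) α ∂μ ≤ ∫ c, f c * q c ∂μ := by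
  have hpi := integrable_of_integral_eq_one hp1
  have hqi := integrable_of_integral_eq_one hq1
  have hf_bdd : BddBelow (Set.range f) :=
    ⟨-B, Set.forall_mem_range.2 fun c => neg_le_of_abs_le (hfB c)⟩
  set g := fun c => min (f c + β) α
  have hg : AEStronglyMeasurable g μ :=
    ((hf.add_const β).min measurable_const).aestronglyMeasurable
  have hgα : ∀ᵐ c ∂μ, |g c| ≤ α :=
    ae_of_all _ fun c => abs_min_add_le_of_neg_le hα (ciInf_le hf_bdd c) hαβ
  have htransport := abs_integral_mul_sub_integral_mul_le hg hgα hpi hqi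
  have hmono : ∫ c, g c * q c ∂μ ≤ ∫ c, f c * q c ∂μ + β :=
    integral_mul_le_integral_mul_add_of_le hq0 hq1 (hqi.bdd_mul hg hgα)
      (hqi.bdd_mul hf.aestronglyMeasurable (ae_of_all _ hfB)) fun c => min_le_left _ _
  have hcomm : ∫ c, p c * g c ∂μ = ∫ c, g c * p c ∂μ := by simp_rw [mul_comm]
  rw [hcomm]
  linarith [neg_abs_le (∫ c, g c * q c ∂μ - ∫ c, g c * p c ∂μ),
    mul_le_mul_of_nonneg_left hqp hα]

/-- Weak duality direction of Proposition 2 of the paper (DRO under total variation):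
for probability densities `p, q` with `∫ |q − p| ≤ δ`, a bounded measurable `f`, and a
dual-feasible pair `(α, β)` (i.e. `α ≥ 0` and `α + β ≥ −inf_c f(c)`), one has
`∫ f·q ≥ −β − δ·α + ∫ p·min(f + β, α)`. -/
theorem weak_duality_total_variation
    {C : Type*} [MeasurableSpace C] (μ : Measure C)
    (p q : C → ℝ) (hp : Measurable p) (hq : Measurable q)
    (hp0 : 0 ≤ᵐ[μ] p) (hq0 : 0 ≤ᵐ[μ] q)
    (hp1 : (∫ c, p c ∂μ) = 1) (hq1 : (∫ c, q c ∂μ) = 1)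
    (f : C → ℝ) (hf : Measurable f) (B : ℝ) (hfB : ∀ c, |f c| ≤ B)
    (δ : ℝ) (hδ : 0 < δ) (hqp : (∫ c, |q c - p c| ∂μ) ≤ δ)
    (α β : ℝ) (hα : 0 ≤ α) (hαβ : -(⨅ c, f c) ≤ α + β) :
    -β - δ * α + ∫ c, p c * min (f c + β) α ∂μ ≤ ∫ c, f c * q c ∂μ :=
  weak_duality_total_variation_general μ p q hq0 hp1 hq1 f hf B hfB δ hqp α β hα hαβ
end
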